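/- Let G be the 8×8 integer matrix G = [[2,1,0,−1,0,2,−1,−2],[1,2,−1,0,1,0,−1,−2],[0,−1,2,−1,−1,2,0,2],[−1,0,−1,2,1,−2,1,0],[0,1,−1,1,3,0,0,0],[2,0,2,−2,0,6,0,0],[−1,−1,0,1,0,0,3,0],[−2,−2,2,0,0,0,0,6]]. Then for every real q with 0 < q < 1: Σ_{u∈ℤ⁸} q^{u G uᵀ} = f₁(q)⁴ − 8·f₁(q)²·Δ₄(q), where f₁(q) = (Σ_{m∈ℤ} q^{m²})·(Σ_{m∈ℤ} q^{2m²}) and Δ₄(q) = (1/4)·(Σ_{m∈ℤ} q^{2(m+1/2)²})²·(Σ_{m∈ℤ} (−q)^{m²})². That is, the theta series of the 8-dimensional odd 2-modular lattice with Gram matrix G equals f₁⁴ − 8f₁²Δ₄. -/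

import Mathlib

open Matrix

noncomputable section

/-- The Gram matrix of the 8-dimensional odd 2-modular lattice `(1/√3)ρ⁻¹(C)`. -/
def G : Matrix (Fin 8) (Fin 8) ℤ :=
  !![2, 1, 0, -1, 0, 2, -1, -2;
     1, 2, -1, 0, 1, 0, -1, -2;
     0, -1, 2, -1, -1, 2, 0, 2;
     -1, 0, -1, 2, 1, -2, 1, 0;
     0, 1, -1, 1, 3, 0, 0, 0;
     2, 0, 2, -2, 0, 6, 0, 0;
     -1, -1, 0, 1, 0, 0, 3, 0;
     -2, -2, 2, 0, 0, 0, 0, 6]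

/-- `f₁(τ) = ϑ₃(τ)ϑ₃(2τ)`, the theta series of the 2-modular lattice `ℤ ⊕ √2ℤ`. -/
def f1 (q : ℝ) : ℝ := (∑' m : ℤ, q ^ ((m : ℝ) ^ 2)) * (∑' m : ℤ, q ^ (2 * (m : ℝ) ^ 2))

/-- `Δ₄(τ) = (1/4)ϑ₂(2τ)²ϑ₄(τ)²`. -/
def Delta4 (q : ℝ) : ℝ :=
  (1 / 4) * (∑' m : ℤ, q ^ (2 * ((m : ℝ) + 1/2) ^ 2)) ^ 2 * (∑' m : ℤ, (-q) ^ (m ^ 2)) ^ 2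

/-!
Write `b = ∑ q^{2m²}` and `c = ∑ q^{2(m+1/2)²}`.
An integer matrix `B` with `B Bᵀ = 2G` and `B A = A B = 2` identifies `√2·L` with the
construction-A lattice `2ℤ⁸ + C` of the binary code `C = {0, 0⁴1⁴, 1⁶0², 1⁴0²1²}`. Each coset
`2ℤ⁸ + c` contributes `∏ᵢ ∑ₘ q^{2(m + cᵢ/2)²}`, so the weight enumerator of `C` gives
`Θ_L = b⁸ + b⁴c⁴ + 2b²c⁶`. Splitting `ℤ²` into the checkerboard lattice (a rotated `√2ℤ²`) and
its translate by `(1,0)` gives `ϑ₃(τ)² = b² + c²` and `ϑ₄(τ)² = b² − c²`; since `f₁ = ϑ₃(τ) b`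
and `Δ₄ = c²ϑ₄(τ)²/4`, the right-hand side is the same polynomial in `b` and `c`.
-/

open Function

open Complex in
theorem summable_rpow_mul_add_sq {q c : ℝ} (hq0 : 0 < q) (hq1 : q < 1) (hc : 0 < c) (h : ℝ) :
    Summable fun m : ℤ => q ^ (c * ((m : ℝ) + h) ^ 2) := by
  set l := -(c * Real.log q) with hl
  have hl0 : 0 < l := by have := Real.log_neg hq0 hq1; nlinarith
  have hs := ((summable_jacobiTheta₂_term_iff ((l * h / Real.pi : ℝ) * I)
    ((l / Real.pi : ℝ) * I)).mpr (by simp; positivity)).norm.mul_left (Real.exp (-(l * h ^ 2)))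
  refine hs.congr fun m => ?_
  rw [norm_jacobiTheta₂_term, ← Real.exp_add, Real.rpow_def_of_pos hq0]
  congr 1
  simp only [mul_im, ofReal_re, I_im, ofReal_im, I_re, mul_zero, mul_one, add_zero, hl]
  field_simp
  ring

theorem hasSum_fin_pi_prod_of_nonneg {β : Type*} {k : ℕ} {f : Fin k → β → ℝ} {a : Fin k → ℝ}
    (hf0 : ∀ i b, 0 ≤ f i b) (hf : ∀ i, HasSum (f i) (a i)) :
    HasSum (fun n : Fin k → β => ∏ i, f i (n i)) (∏ i, a i) := by
  induction k with
  | zero => simp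
  | succ k ih =>
    set g := fun n : Fin k → β => ∏ i : Fin k, f i.succ (n i)
    have htail : HasSum g (∏ i : Fin k, a i.succ) :=
      ih (fun i b => hf0 i.succ b) fun i => hf i.succ
    have hsummable := (hf 0).summable.mul_of_nonneg htail.summable (hf0 0)
      fun n => Finset.prod_nonneg fun i _ => hf0 i.succ (n i)
    have hprod := (hf 0).mul htail hsummable
    rw [Fin.prod_univ_succ, ← (Fin.consEquiv fun _ => β).hasSum_iff]
    simpa [Function.comp_def, Fin.prod_univ_succ] using hprod

theorem hasSum_of_bijective_of_hasSum_fiberwise {α K X Y : Type*} [AddCommMonoid α]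
    [TopologicalSpace α] [ContinuousAdd α] [Fintype K] {e : K × X → Y} (he : Bijective e)
    {F : Y → α} {a : K → α} (hF : ∀ k, HasSum (fun x => F (e (k, x))) (a k)) :
    HasSum F (∑ k, a k) := by
  classical
  rw [← (Equiv.ofBijective e he).hasSum_iff]
  have hpiece : ∀ k, HasSum (fun p : K × X => if p.1 = k then F (e p) else 0) (a k) := by
    intro k
    rw [← (Prod.mk_right_injective k).hasSum_iff]
    · simpa [Function.comp_def] using hF k
    · rintro ⟨k', x⟩ hp
      have : k' ≠ k := fun hk => hp ⟨x, by rw [hk]⟩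
      simp [this]
  simpa [Function.comp_def] using hasSum_sum (s := Finset.univ) fun k _ => hpiece k

/-- `shiftedTheta q 0 = ϑ₃(2τ)` and `shiftedTheta q (1/2) = ϑ₂(2τ)`. -/
def shiftedTheta (q h : ℝ) : ℝ := ∑' m : ℤ, q ^ (2 * ((m : ℝ) + h) ^ 2)

theorem hasSum_shiftedTheta {q : ℝ} (hq0 : 0 < q) (hq1 : q < 1) (h : ℝ) :
    HasSum (fun m : ℤ => q ^ (2 * ((m : ℝ) + h) ^ 2)) (shiftedTheta q h) :=
  (summable_rpow_mul_add_sq hq0 hq1 two_pos h).hasSum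

def checkerboardParam (p : Fin 2 × (ℤ × ℤ)) : ℤ × ℤ := (p.2.1 + p.2.2 + p.1, p.2.1 - p.2.2)

theorem checkerboardParam_bijective : Bijective checkerboardParam := by
  constructor
  · rintro ⟨j, u, v⟩ ⟨j', u', v'⟩ h
    simp only [checkerboardParam, Prod.mk.injEq] at h
    obtain rfl : j = j' := Fin.ext (by omega)
    simp only [Prod.mk.injEq, true_and]
    omega
  · rintro ⟨x, y⟩
    rcases Int.even_or_odd (x + y) with ⟨c, hc⟩ | ⟨c, hc⟩
    · exact ⟨(0, c, x - c), by simp only [checkerboardParam, Prod.mk.injEq]; omega⟩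
    · exact ⟨(1, c, x - c - 1), by simp only [checkerboardParam, Prod.mk.injEq]; omega⟩

theorem zpow_mul_rpow_sq_add_mul_sub {q ε : ℝ} (hq0 : 0 < q) (hε : ε ^ 2 = 1) (j : ℕ) (u v : ℤ) :
    ε ^ (u + v + j) * q ^ (((u + v + j : ℤ) : ℝ) ^ 2) *
        (ε ^ (u - v) * q ^ (((u - v : ℤ) : ℝ) ^ 2)) =
      ε ^ j * (q ^ (2 * ((u : ℝ) + j / 2) ^ 2) * q ^ (2 * ((v : ℝ) + j / 2) ^ 2)) := by
  have hε0 : ε ≠ 0 := by rintro rfl; norm_num at hε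
  have hsign : ε ^ (u + v + j) * ε ^ (u - v) = ε ^ j := by
    rw [← zpow_add₀ hε0, show u + v + j + (u - v) = 2 * u + j by ring, zpow_add₀ hε0,
      _root_.zpow_mul, zpow_ofNat, hε, _root_.one_zpow, one_mul, zpow_natCast]
  have hexp : q ^ (((u + v + j : ℤ) : ℝ) ^ 2) * q ^ (((u - v : ℤ) : ℝ) ^ 2) =
      q ^ (2 * ((u : ℝ) + j / 2) ^ 2) * q ^ (2 * ((v : ℝ) + j / 2) ^ 2) := by
    rw [← Real.rpow_add hq0, ← Real.rpow_add hq0]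
    push_cast
    ring_nf
  rw [← hsign, ← hexp]
  ring

theorem sq_tsum_zpow_mul_rpow_sq {q ε : ℝ} (hq0 : 0 < q) (hq1 : q < 1) (hε : ε ^ 2 = 1) :
    (∑' m : ℤ, ε ^ m * q ^ ((m : ℝ) ^ 2)) ^ 2 =
      shiftedTheta q 0 ^ 2 + ε * shiftedTheta q (1 / 2) ^ 2 := by
  set g : ℤ → ℝ := fun m => ε ^ m * q ^ ((m : ℝ) ^ 2)
  have hnorm : Summable fun m => ‖g m‖ := by
    have habs : |ε| = 1 :=
      (pow_eq_one_iff_of_nonneg (abs_nonneg ε) two_ne_zero).mp (by rw [sq_abs, hε])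
    refine (summable_rpow_mul_add_sq hq0 hq1 one_pos 0).congr fun m => ?_
    simp [g, norm_mul, norm_zpow, habs, abs_of_pos (Real.rpow_pos_of_pos hq0 _)]
  have hsquare : HasSum (fun p : ℤ × ℤ => g p.1 * g p.2) ((∑' m, g m) ^ 2) := by
    have hsum : Summable fun p : ℤ × ℤ => g p.1 * g p.2 := summable_mul_of_summable_norm hnorm hnorm
    rw [sq]
    exact hnorm.of_norm.hasSum.mul hnorm.of_norm.hasSum hsum
  have hcoset (j : Fin 2) : HasSum (fun p => g (checkerboardParam (j, p)).1 *
      g (checkerboardParam (j, p)).2) (ε ^ (j : ℕ) * shiftedTheta q ((j : ℝ) / 2) ^ 2) := by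
    have hθ := hasSum_shiftedTheta hq0 hq1 ((j : ℝ) / 2)
    have hθ0 (m : ℤ) : 0 ≤ q ^ (2 * ((m : ℝ) + (j : ℝ) / 2) ^ 2) := by positivity
    have hsum := hθ.summable.mul_of_nonneg hθ.summable hθ0 hθ0
    rw [sq]
    exact ((hθ.mul hθ hsum).mul_left _).congr_fun fun p =>
      zpow_mul_rpow_sq_add_mul_sub hq0 hε j p.1 p.2
  have := hasSum_of_bijective_of_hasSum_fiberwise (F := fun p : ℤ × ℤ => g p.1 * g p.2)
    checkerboardParam_bijective hcoset
  rw [hsquare.unique this, Fin.sum_univ_two]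
  norm_num

theorem dotProduct_vecMul_self_eq {ι R : Type*} [Fintype ι] [CommRing R] {G B : Matrix ι ι R}
    (hB : B * Bᵀ = 2 • G) (u : ι → R) :
    (u ᵥ* B) ⬝ᵥ (u ᵥ* B) = 2 * (u ⬝ᵥ G *ᵥ u) := by
  rw [← dotProduct_mulVec, ← mulVec_transpose, mulVec_mulVec, hB, smul_mulVec,
    dotProduct_smul, nsmul_eq_mul, Nat.cast_ofNat]

section ConstructionA

variable {ι K : Type*} [Fintype ι] [DecidableEq ι] {G A B : Matrix ι ι ℤ} {s t : K → ι → ℤ}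

/-- `(k, m) ↦ (2m + s k)·B⁻¹` once `A B = B A = 2` and `t k ᵥ* B = s k`. -/
def cosetParam (A : Matrix ι ι ℤ) (t : K → ι → ℤ) (p : K × (ι → ℤ)) : ι → ℤ := p.2 ᵥ* A + t p.1

theorem cosetParam_vecMul (hAB : A * B = 2) (ht : ∀ k, t k ᵥ* B = s k) (p : K × (ι → ℤ)) :
    cosetParam A t p ᵥ* B = (2 : ℤ) • p.2 + s p.1 := by
  rw [cosetParam, add_vecMul, vecMul_vecMul, hAB, ht, vecMul_ofNat, op_smul_eq_smul]

theorem vecMul_injective_of_mul_eq_two (hBA : B * A = 2) : Injective fun u : ι → ℤ => u ᵥ* B := by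
  intro u v huv
  simpa [vecMul_vecMul, hBA] using congrArg (· ᵥ* A) huv

theorem cosetParam_bijective (hAB : A * B = 2) (hBA : B * A = 2) (ht : ∀ k, t k ᵥ* B = s k)
    (hs : ∀ k k', (∀ i, (s k i : ZMod 2) = s k' i) → k = k')
    (hcover : ∀ w : ι → ZMod 2,
      ∃ k, w ᵥ* B.map (Int.castRingHom (ZMod 2)) = fun i => (s k i : ZMod 2)) :
    Bijective (cosetParam A t) := by
  constructor
  · rintro ⟨k, m⟩ ⟨k', m'⟩ h
    have hv : ∀ i, 2 * m i + s k i = 2 * m' i + s k' i := fun i => by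
      simpa [cosetParam_vecMul hAB ht] using congrFun (congrArg (· ᵥ* B) h) i
    obtain rfl : k = k' := hs k k' fun i =>
      (ZMod.intCast_eq_intCast_iff_dvd_sub _ _ 2).mpr ⟨m i - m' i, by push_cast; linarith [hv i]⟩
    obtain rfl : m = m' := funext fun i => by linarith [hv i]
    rfl
  · intro u
    obtain ⟨k, hk⟩ := hcover (Int.castRingHom (ZMod 2) ∘ u)
    have hdvd : ∀ i, (2 : ℤ) ∣ (u ᵥ* B) i - s k i := fun i => by
      have := congrFun hk i
      rw [← RingHom.map_vecMul] at this
      exact_mod_cast (ZMod.intCast_eq_intCast_iff_dvd_sub _ _ 2).mp this.symm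
    refine ⟨(k, fun i => ((u ᵥ* B) i - s k i) / 2), vecMul_injective_of_mul_eq_two hBA ?_⟩
    funext i
    simp only [cosetParam_vecMul hAB ht, Pi.add_apply, Pi.smul_apply, smul_eq_mul]
    rw [Int.mul_ediv_cancel' (hdvd i)]
    ring

theorem cast_quadForm_cosetParam (hG : B * Bᵀ = 2 • G) (hAB : A * B = 2) (ht : ∀ k, t k ᵥ* B = s k)
    (p : K × (ι → ℤ)) :
    ((cosetParam A t p ⬝ᵥ G *ᵥ cosetParam A t p : ℤ) : ℝ) =
      ∑ i, 2 * ((p.2 i : ℝ) + s p.1 i / 2) ^ 2 := by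
  have h := congrArg (Int.cast : ℤ → ℝ) (dotProduct_vecMul_self_eq hG (cosetParam A t p))
  rw [cosetParam_vecMul hAB ht] at h
  simp only [dotProduct, Pi.add_apply, Pi.smul_apply, smul_eq_mul] at h ⊢
  push_cast at h ⊢
  have hsum : ∑ i, 2 * ((p.2 i : ℝ) + s p.1 i / 2) ^ 2 =
      (∑ i, (2 * (p.2 i : ℝ) + s p.1 i) * (2 * p.2 i + s p.1 i)) / 2 := by
    rw [Finset.sum_div]
    exact Finset.sum_congr rfl fun i _ => by ring
  linarith

end ConstructionA

theorem hasSum_theta_of_constructionA {n : ℕ} {K : Type*} [Fintype K]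
    {G A B : Matrix (Fin n) (Fin n) ℤ} {s t : K → Fin n → ℤ} {q : ℝ} (hq0 : 0 < q) (hq1 : q < 1)
    (hG : B * Bᵀ = 2 • G) (hAB : A * B = 2) (hBA : B * A = 2) (ht : ∀ k, t k ᵥ* B = s k)
    (hs : ∀ k k', (∀ i, (s k i : ZMod 2) = s k' i) → k = k')
    (hcover : ∀ w : Fin n → ZMod 2,
      ∃ k, w ᵥ* B.map (Int.castRingHom (ZMod 2)) = fun i => (s k i : ZMod 2)) :
    HasSum (fun u : Fin n → ℤ => q ^ (u ⬝ᵥ G *ᵥ u)) (∑ k, ∏ i, shiftedTheta q (s k i / 2)) := by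
  refine hasSum_of_bijective_of_hasSum_fiberwise (cosetParam_bijective hAB hBA ht hs hcover)
    fun k => ?_
  have hterm : ∀ m : Fin n → ℤ, q ^ (cosetParam A t (k, m) ⬝ᵥ G *ᵥ cosetParam A t (k, m)) =
      ∏ i, q ^ (2 * ((m i : ℝ) + s k i / 2) ^ 2) := fun m => by
    rw [← Real.rpow_intCast, cast_quadForm_cosetParam hG hAB ht, Real.rpow_sum_of_pos hq0]
  simp only [hterm]
  exact hasSum_fin_pi_prod_of_nonneg (f := fun i (m : ℤ) => q ^ (2 * ((m : ℝ) + s k i / 2) ^ 2))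
    (fun _ _ => by positivity) fun i => hasSum_shiftedTheta hq0 hq1 _

def gramEmbed : Matrix (Fin 8) (Fin 8) ℤ :=
  !![0, 0, 0, 0, -2, 0, 0, 0;
     0, 0, 0, 0, -1, -1, -1, -1;
     0, 0, 0, 0, 0, 0, 0, 2;
     0, 0, 0, 0, 1, 1, -1, -1;
     -1, -1, -1, -1, 0, 0, -1, -1;
     -2, 0, 0, 0, -2, 0, 0, 2;
     -1, -1, 1, 1, 1, 1, 0, 0;
     0, 0, -2, 0, 2, 0, 0, 2]

def gramEmbedAdj : Matrix (Fin 8) (Fin 8) ℤ :=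
  !![1, 0, 1, 0, 0, -1, 0, 0;
     -1, 0, -1, 1, -1, 1, -1, 0;
     -1, 0, 1, 0, 0, 0, 0, -1;
     1, 1, -1, 0, -1, 0, 1, 1;
     -1, 0, 0, 0, 0, 0, 0, 0;
     1, -1, 0, 1, 0, 0, 0, 0;
     0, -1, -1, -1, 0, 0, 0, 0;
     0, 0, 1, 0, 0, 0, 0, 0]

def gramCode : Fin 4 → Fin 8 → ℤ :=
  ![![0, 0, 0, 0, 0, 0, 0, 0], ![0, 0, 0, 0, 1, 1, 1, 1],
    ![1, 1, 1, 1, 1, 1, 0, 0], ![1, 1, 1, 1, 0, 0, 1, 1]]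

def gramCodeLift : Fin 4 → Fin 8 → ℤ :=
  ![![0, 0, 0, 0, 0, 0, 0, 0], ![0, -1, 0, 0, 0, 0, 0, 0],
    ![0, 0, 0, 1, -1, 0, 0, 0], ![0, 0, 0, 0, -1, 0, 0, 0]]

theorem gramEmbed_mul_transpose : gramEmbed * gramEmbedᵀ = 2 • G := by decide

theorem gramEmbedAdj_mul_gramEmbed : gramEmbedAdj * gramEmbed = 2 := by decide

theorem gramEmbed_mul_gramEmbedAdj : gramEmbed * gramEmbedAdj = 2 := by decide

theorem gramCodeLift_vecMul : ∀ k, gramCodeLift k ᵥ* gramEmbed = gramCode k := by decide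

theorem gramCode_injective_mod_two :
    ∀ k k', (∀ i, (gramCode k i : ZMod 2) = gramCode k' i) → k = k' := by decide

set_option maxRecDepth 100000 in
theorem exists_gramCode_eq_vecMul_mod_two : ∀ w : Fin 8 → ZMod 2,
    ∃ k, w ᵥ* gramEmbed.map (Int.castRingHom (ZMod 2)) = fun i => (gramCode k i : ZMod 2) := by
  decide

theorem hasSum_theta_G {q : ℝ} (hq0 : 0 < q) (hq1 : q < 1) :
    HasSum (fun u : Fin 8 → ℤ => q ^ (u ⬝ᵥ G *ᵥ u))
      (shiftedTheta q 0 ^ 8 + shiftedTheta q 0 ^ 4 * shiftedTheta q (1 / 2) ^ 4 +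
        2 * shiftedTheta q 0 ^ 2 * shiftedTheta q (1 / 2) ^ 6) := by
  convert hasSum_theta_of_constructionA hq0 hq1 gramEmbed_mul_transpose
    gramEmbedAdj_mul_gramEmbed gramEmbed_mul_gramEmbedAdj gramCodeLift_vecMul
    gramCode_injective_mod_two exists_gramCode_eq_vecMul_mod_two using 1
  simp only [gramCode, Fin.sum_univ_four, Fin.prod_univ_eight, Fin.isValue, cons_val_zero,
    cons_val_one, cons_val, cons_val', cons_val_fin_one, Int.cast_zero, Int.cast_one, zero_div]
  ring

theorem neg_zpow_sq (q : ℝ) (m : ℤ) : (-q) ^ (m ^ 2) = (-1) ^ m * q ^ ((m : ℝ) ^ 2) := by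
  have hsign : (-1 : ℝ) ^ (m ^ 2) = (-1) ^ m := by
    rcases Int.even_or_odd m with hm | hm
    · rw [hm.neg_one_zpow, ((Int.even_pow' two_ne_zero).mpr hm).neg_one_zpow]
    · rw [hm.neg_one_zpow, hm.pow.neg_one_zpow]
  rw [neg_eq_neg_one_mul, mul_zpow, hsign, ← Real.rpow_intCast q]
  norm_cast

theorem theta_polynomial_identity {a b c d : ℝ} (h3 : a ^ 2 = b ^ 2 + c ^ 2)
    (h4 : d ^ 2 = b ^ 2 - c ^ 2) :
    b ^ 8 + b ^ 4 * c ^ 4 + 2 * b ^ 2 * c ^ 6 =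
      (a * b) ^ 4 - 8 * (a * b) ^ 2 * (1 / 4 * c ^ 2 * d ^ 2) := by
  linear_combination (2 * b ^ 2 * c ^ 2 * d ^ 2 - b ^ 4 * (a ^ 2 + b ^ 2 + c ^ 2)) * h3 +
    2 * b ^ 2 * c ^ 2 * (b ^ 2 + c ^ 2) * h4

/-- For `0 < q < 1`, the theta series of the 8-dimensional odd
2-modular lattice with Gram matrix `G` equals `f₁⁴ − 8f₁²Δ₄`. -/
theorem theta_of_G_eq (q : ℝ) (h0 : 0 < q) (h1 : q < 1) :
    (∑' u : Fin 8 → ℤ, q ^ (u ⬝ᵥ G.mulVec u)) =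
      f1 q ^ 4 - 8 * f1 q ^ 2 * Delta4 q := by
  have hϑ3 := sq_tsum_zpow_mul_rpow_sq h0 h1 (one_pow 2)
  have hϑ4 := sq_tsum_zpow_mul_rpow_sq h0 h1 neg_one_sq
  simp only [_root_.one_zpow, one_mul] at hϑ3
  have hb : shiftedTheta q 0 = ∑' m : ℤ, q ^ (2 * (m : ℝ) ^ 2) := by simp [shiftedTheta]
  rw [(hasSum_theta_G h0 h1).tsum_eq, f1, Delta4, ← hb, tsum_congr (neg_zpow_sq q)]
  exact theta_polynomial_identity hϑ3 (by linear_combination hϑ4)
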